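/- Let U ∈ ℝ^{d×m} have i.i.d. Rademacher columns, g ∈ ℝ^d a fixed nonzero vector, and suppose v ↦ G(v) is an L_v-Lipschitz map from ℝ^p to ℝ^d with L_v > 0. If v̂* satisfies (1/m)UUᵀG(v) = G(v̂*) (i.e., the attacker's reconstruction loss is zero), then E[‖v − v̂*‖²] ≥ ((d−1)/(m·L_v²))·‖G(v)‖², where G(v) = g. -/

import Mathlib

/-!
Write `g = G v` and let `u_j` be the columns of `U`. The zero-loss condition gives
`g - G v̂* = (1/m) ∑ⱼ (g - ⟪u_j, g⟫ u_j)`. Since `E[u uᵀ] = I`, the summands are independent and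
centred, so the cross terms vanish in expectation and
`E‖g - G v̂*‖² = (1/m) E‖g - ⟪u, g⟫ u‖² = ((d - 1)/m) ‖g‖²`, using `‖u‖² = d`.
The Lipschitz bound `‖g - G v̂*‖ ≤ L ‖v - v̂*‖` turns this into the lower bound.
-/

open Finset

section
variable {ι κ M : Type*} [Fintype ι] [DecidableEq ι] [Fintype κ] [AddCommMonoid M]

theorem Fintype.sum_comp_eval (f : κ → M) (j : ι) :
    ∑ x : ι → κ, f (x j) = Fintype.card κ ^ (Fintype.card ι - 1) • ∑ b, f b := by
  rw [← (Equiv.funSplitAt j κ).symm.sum_comp, Fintype.sum_prod_type]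
  simp [Fintype.card_subtype_compl, smul_sum]

theorem Fintype.sum_comp_eval_eval_eq_zero {F : κ → κ → M} (hF : ∀ c, ∑ b, F b c = 0)
    {j k : ι} (hjk : j ≠ k) : ∑ x : ι → κ, F (x j) (x k) = 0 := by
  rw [← (Equiv.funSplitAt j κ).symm.sum_comp, Fintype.sum_prod_type_right]
  refine Fintype.sum_eq_zero _ fun y => ?_
  simpa [hjk.symm] using hF (y ⟨k, hjk.symm⟩)

theorem sum_norm_sq_sum_comp_eval {E : Type*} [NormedAddCommGroup E] [InnerProductSpace ℝ E]
    {w : κ → E} (hw : ∑ b, w b = 0) :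
    ∑ x : ι → κ, ‖∑ j, w (x j)‖ ^ 2
      = Fintype.card ι * Fintype.card κ ^ (Fintype.card ι - 1) * ∑ b, ‖w b‖ ^ 2 := by
  have hoff : ∀ c, ∑ b, inner ℝ (w b) (w c) = 0 := fun c => by
    rw [← sum_inner, hw, inner_zero_left]
  calc ∑ x : ι → κ, ‖∑ j, w (x j)‖ ^ 2
      = ∑ j, ∑ k, ∑ x : ι → κ, inner ℝ (w (x j)) (w (x k)) := by
        simp_rw [← real_inner_self_eq_norm_sq, sum_inner, inner_sum]
        rw [sum_comm]; exact sum_congr rfl fun _ _ => sum_comm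
    _ = ∑ j : ι, ∑ x : ι → κ, ‖w (x j)‖ ^ 2 := by
        refine sum_congr rfl fun j _ => ?_
        rw [sum_eq_single j (fun k _ hkj => Fintype.sum_comp_eval_eval_eq_zero hoff hkj.symm)
          (by simp)]
        simp_rw [real_inner_self_eq_norm_sq]
    _ = _ := by simp [Fintype.sum_comp_eval (fun b => ‖w b‖ ^ 2), mul_assoc]

end

noncomputable def boolSign (b : Bool) : ℝ := if b then 1 else -1

@[simp]
theorem boolSign_mul_self (b : Bool) : boolSign b * boolSign b = 1 := by
  cases b <;> simp [boolSign]

theorem sum_boolSign : ∑ b, boolSign b = 0 := by simp [boolSign]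

section
variable {n : Type*} [Fintype n]

noncomputable def signVector (τ : n → Bool) : EuclideanSpace ℝ n :=
  WithLp.toLp 2 fun i => boolSign (τ i)

omit [Fintype n] in
@[simp]
theorem signVector_apply (τ : n → Bool) (i : n) : signVector τ i = boolSign (τ i) := rfl

theorem inner_signVector (τ : n → Bool) (g : EuclideanSpace ℝ n) :
    inner ℝ (signVector τ) g = ∑ i, boolSign (τ i) * g i := by
  simp [PiLp.inner_apply, mul_comm]

theorem norm_sq_signVector (τ : n → Bool) : ‖signVector τ‖ ^ 2 = Fintype.card n := by
  rw [EuclideanSpace.norm_sq_eq]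
  simp [Real.norm_eq_abs, sq]

variable [DecidableEq n]

theorem sum_boolSign_mul_boolSign (i l : n) :
    ∑ τ : n → Bool, boolSign (τ i) * boolSign (τ l)
      = if i = l then 2 ^ Fintype.card n else 0 := by
  split_ifs with h
  · subst h; simp
  · exact Fintype.sum_comp_eval_eval_eq_zero (F := fun b c => boolSign b * boolSign c)
      (fun c => by rw [← sum_mul, sum_boolSign, zero_mul]) h

theorem sum_inner_smul_signVector (g : EuclideanSpace ℝ n) :
    ∑ τ : n → Bool, inner ℝ (signVector τ) g • signVector τ = (2 ^ Fintype.card n : ℝ) • g := by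
  ext i
  simp only [WithLp.ofLp_sum, Finset.sum_apply, PiLp.smul_apply, smul_eq_mul, inner_signVector,
    signVector_apply, sum_mul]
  rw [sum_comm]
  simp_rw [mul_right_comm _ (g _), ← sum_mul, sum_boolSign_mul_boolSign]
  simp

theorem sum_inner_signVector_sq (g : EuclideanSpace ℝ n) :
    ∑ τ : n → Bool, inner ℝ (signVector τ) g ^ 2 = 2 ^ Fintype.card n * ‖g‖ ^ 2 := by
  calc ∑ τ : n → Bool, inner ℝ (signVector τ) g ^ 2
      = inner ℝ (∑ τ : n → Bool, inner ℝ (signVector τ) g • signVector τ) g := by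
        simp [sum_inner, real_inner_smul_left, sq]
    _ = _ := by rw [sum_inner_smul_signVector, real_inner_smul_left, real_inner_self_eq_norm_sq]

theorem sum_sub_inner_smul_signVector (g : EuclideanSpace ℝ n) :
    ∑ τ : n → Bool, (g - inner ℝ (signVector τ) g • signVector τ) = 0 := by
  rw [sum_sub_distrib, sum_inner_smul_signVector, sum_const, card_univ, Fintype.card_fun,
    Fintype.card_bool, ← Nat.cast_smul_eq_nsmul ℝ]
  simp

theorem sum_norm_sq_sub_inner_smul_signVector (g : EuclideanSpace ℝ n) :
    ∑ τ : n → Bool, ‖g - inner ℝ (signVector τ) g • signVector τ‖ ^ 2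
      = 2 ^ Fintype.card n * (Fintype.card n - 1) * ‖g‖ ^ 2 := by
  have h : ∀ τ : n → Bool, ‖g - inner ℝ (signVector τ) g • signVector τ‖ ^ 2
      = ‖g‖ ^ 2 + (Fintype.card n - 2) * inner ℝ (signVector τ) g ^ 2 := fun τ => by
    rw [norm_sub_sq_real, norm_smul, mul_pow, norm_sq_signVector, real_inner_smul_right,
      real_inner_comm, Real.norm_eq_abs, sq_abs]
    ring
  simp only [h, sum_add_distrib, ← mul_sum, sum_inner_signVector_sq]
  simp
  ring

end

section
variable {ι n : Type*} [Fintype ι] [Fintype n]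

/-- The paper's `(1/m) U Uᵀ g`, the columns of `U` being `signVector (σ j)`. -/
noncomputable def sketch (σ : ι → n → Bool) (g : EuclideanSpace ℝ n) : EuclideanSpace ℝ n :=
  (Fintype.card ι : ℝ)⁻¹ • ∑ j, inner ℝ (signVector (σ j)) g • signVector (σ j)

theorem sub_sketch [Nonempty ι] (σ : ι → n → Bool) (g : EuclideanSpace ℝ n) :
    g - sketch σ g
      = (Fintype.card ι : ℝ)⁻¹ • ∑ j, (g - inner ℝ (signVector (σ j)) g • signVector (σ j)) := by
  rw [sketch, sum_sub_distrib, smul_sub, sum_const, card_univ, ← Nat.cast_smul_eq_nsmul ℝ,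
    inv_smul_smul₀ (by positivity)]

variable [DecidableEq ι] [DecidableEq n]

theorem average_norm_sq_sub_sketch [Nonempty ι] (g : EuclideanSpace ℝ n) :
    (Fintype.card (ι → n → Bool) : ℝ)⁻¹ * ∑ σ : ι → n → Bool, ‖g - sketch σ g‖ ^ 2
      = (Fintype.card n - 1) / Fintype.card ι * ‖g‖ ^ 2 := by
  have hpow : ((2 : ℝ) ^ Fintype.card n) ^ Fintype.card ι
      = (2 ^ Fintype.card n) ^ (Fintype.card ι - 1) * 2 ^ Fintype.card n :=
    (pow_sub_one_mul Fintype.card_ne_zero _).symm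
  simp_rw [sub_sketch, norm_smul, norm_inv, RCLike.norm_natCast, mul_pow]
  rw [← mul_sum, sum_norm_sq_sum_comp_eval (sum_sub_inner_smul_signVector g),
    sum_norm_sq_sub_inner_smul_signVector, Fintype.card_fun, Fintype.card_fun, Fintype.card_bool]
  push_cast
  rw [hpow]
  field_simp
end

theorem stmt12_general {d m p : ℕ} (hm : 0 < m) (L : ℝ) (hL : 0 < L)
    (G : EuclideanSpace ℝ (Fin p) → EuclideanSpace ℝ (Fin d))
    (hLip : ∀ a b, ‖G a - G b‖ ≤ L * ‖a - b‖)
    (v : EuclideanSpace ℝ (Fin p))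
    (vhat : (Fin m → Fin d → Bool) → EuclideanSpace ℝ (Fin p))
    (hopt : ∀ σ : Fin m → Fin d → Bool,
      G (vhat σ) = (m : ℝ)⁻¹ •
        ∑ j, (∑ i, (if σ j i then (1 : ℝ) else -1) * G v i) •
          ((WithLp.equiv 2 (Fin d → ℝ)).symm fun i => if σ j i then (1 : ℝ) else -1)) :
    ((d : ℝ) - 1) / (m * L ^ 2) * ‖G v‖ ^ 2
      ≤ (Fintype.card (Fin m → Fin d → Bool) : ℝ)⁻¹ *
          ∑ σ : Fin m → Fin d → Bool, ‖v - vhat σ‖ ^ 2 := by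
  have : NeZero m := ⟨hm.ne'⟩
  have hsketch : ∀ σ, G (vhat σ) = sketch σ (G v) := fun σ => by
    simp_rw [hopt σ, sketch, inner_signVector, Fintype.card_fin]
    rfl
  have hLip_sq : ∀ σ, ‖G v - sketch σ (G v)‖ ^ 2 ≤ L ^ 2 * ‖v - vhat σ‖ ^ 2 := fun σ => by
    rw [← hsketch, ← mul_pow]
    exact pow_le_pow_left₀ (norm_nonneg _) (hLip _ _) 2
  calc ((d : ℝ) - 1) / (m * L ^ 2) * ‖G v‖ ^ 2
      = (L ^ 2)⁻¹ * ((Fintype.card (Fin m → Fin d → Bool) : ℝ)⁻¹ *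
          ∑ σ : Fin m → Fin d → Bool, ‖G v - sketch σ (G v)‖ ^ 2) := by
        rw [average_norm_sq_sub_sketch]
        simp only [Fintype.card_fin]
        field_simp
    _ ≤ (L ^ 2)⁻¹ * ((Fintype.card (Fin m → Fin d → Bool) : ℝ)⁻¹ *
          ∑ σ : Fin m → Fin d → Bool, L ^ 2 * ‖v - vhat σ‖ ^ 2) := by
        gcongr with σ
        exact hLip_sq σ
    _ = _ := by
        rw [← mul_sum]
        field_simp

/-- Let `U ∈ ℝ^{d×m}` have i.i.d. Rademacher columns (expectation modeled as a
uniform average over sign patterns `σ : Fin m → Fin d → Bool`), `g = G(v)` fixed nonzero, and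
`G : ℝ^p → ℝ^d` an `L`-Lipschitz map. If the attacker's reconstruction `v̂*(U)` satisfies
`(1/m) U Uᵀ G(v) = G(v̂*)`, then `E[‖v − v̂*‖²] ≥ ((d−1)/(m L²)) ‖G(v)‖²`. -/
theorem stmt12 {d m p : ℕ} (hm : 0 < m) (L : ℝ) (hL : 0 < L)
    (G : EuclideanSpace ℝ (Fin p) → EuclideanSpace ℝ (Fin d))
    (hLip : ∀ a b, ‖G a - G b‖ ≤ L * ‖a - b‖)
    (v : EuclideanSpace ℝ (Fin p)) (hg : G v ≠ 0)
    (vhat : (Fin m → Fin d → Bool) → EuclideanSpace ℝ (Fin p))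
    (hopt : ∀ σ : Fin m → Fin d → Bool,
      G (vhat σ) = (m : ℝ)⁻¹ •
        ∑ j, (∑ i, (if σ j i then (1 : ℝ) else -1) * G v i) •
          ((WithLp.equiv 2 (Fin d → ℝ)).symm fun i => if σ j i then (1 : ℝ) else -1)) :
    ((d : ℝ) - 1) / (m * L ^ 2) * ‖G v‖ ^ 2
      ≤ (Fintype.card (Fin m → Fin d → Bool) : ℝ)⁻¹ *
          ∑ σ : Fin m → Fin d → Bool, ‖v - vhat σ‖ ^ 2 :=
  stmt12_general hm L hL G hLip v vhat hopt
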